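/- arXiv:1105.3748 — 4 statements merged into one kernel-verified Lean document; each statement's English description precedes it below -/
import Mathlib

section
/- Let g : ℝ≥0 → ℝ≥0 be non-decreasing and subadditive with g(0) ≥ 0, and let w_a, w_o, w_j ≥ 0. Then ∫_{w_a}^{w_a+w_j} g(x) dx − ∫_{max(w_a−w_o−w_j,0)}^{max(w_a−w_o,0)} g(x) dx ≤ 2 ∫_0^{w_j} g(w_o + x) dx. -/
/-!
Put c = w_o + w_j. On [w_a, w_a + w_j], monotonicity bounds g by g(c) left of c, and
subadditivity bounds g(x) by g(x - c) + g(c) right of c; integrating, the first integral is at most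
w_j g(c) plus the integral of g over [(w_a - c)_+, (w_a + w_j - c)_+], which is the subtracted one.
Finally w_j g(w_o + w_j) ≤ 2 ∫₀^{w_j} g(w_o + x) dx, by integrating
g(w_o + w_j) ≤ g(w_o + x) + g(w_j - x) and using ∫₀^{w_j} g(w_j - x) dx ≤ ∫₀^{w_j} g(w_o + x) dx.
-/

open Set intervalIntegral MeasureTheory

section

variable {g : ℝ → ℝ}

lemma intervalIntegrable_comp_add_of_monotoneOn_Ici (hmono : MonotoneOn g (Ici 0))
    {c a b : ℝ} (ha : 0 ≤ c + a) (hb : 0 ≤ c + b) :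
    IntervalIntegrable (fun x ↦ g (c + x)) volume a b := by
  refine MonotoneOn.intervalIntegrable fun x hx y hy hxy ↦ hmono ?_ ?_ (by linarith)
  · rcases le_total a b with h | h <;> simp_all [uIcc_of_le, uIcc_of_ge] <;> linarith [hx.1]
  · rcases le_total a b with h | h <;> simp_all [uIcc_of_le, uIcc_of_ge] <;> linarith [hy.1]

lemma intervalIntegrable_of_monotoneOn_Ici (hmono : MonotoneOn g (Ici 0)) {a b : ℝ}
    (ha : 0 ≤ a) (hb : 0 ≤ b) : IntervalIntegrable g volume a b := by
  simpa using intervalIntegrable_comp_add_of_monotoneOn_Ici hmono (c := 0) (by simpa) (by simpa)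

lemma integral_le_mul_of_monotoneOn_Ici (hmono : MonotoneOn g (Ici 0)) {s t c : ℝ}
    (hs : 0 ≤ s) (hst : s ≤ t) (htc : t ≤ c) : ∫ x in s..t, g x ≤ (t - s) * g c := by
  calc ∫ x in s..t, g x ≤ ∫ _ in s..t, g c :=
        integral_mono_on hst (intervalIntegrable_of_monotoneOn_Ici hmono hs (hs.trans hst))
          intervalIntegrable_const fun x hx ↦
            hmono (hs.trans hx.1) (mem_Ici.2 (by linarith [hx.1])) (hx.2.trans htc)
    _ = (t - s) * g c := by simp

lemma integral_le_mul_add_integral_sub_of_subadditive (hmono : MonotoneOn g (Ici 0))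
    (hsub : ∀ x y, 0 ≤ x → 0 ≤ y → g (x + y) ≤ g x + g y) {s t c : ℝ}
    (hc : 0 ≤ c) (hcs : c ≤ s) (hst : s ≤ t) :
    ∫ x in s..t, g x ≤ (t - s) * g c + ∫ x in (s - c)..(t - c), g x := by
  have hshift : IntervalIntegrable (fun x ↦ g (-c + x)) volume s t :=
    intervalIntegrable_comp_add_of_monotoneOn_Ici hmono (by linarith) (by linarith)
  calc ∫ x in s..t, g x ≤ ∫ x in s..t, (g (-c + x) + g c) := by
        refine integral_mono_on hst
          (intervalIntegrable_of_monotoneOn_Ici hmono (hc.trans hcs) (by linarith))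
          (hshift.add intervalIntegrable_const) fun x hx ↦ ?_
        simpa using hsub (-c + x) c (by linarith [hx.1]) hc
    _ = (t - s) * g c + ∫ x in (s - c)..(t - c), g x := by
        rw [integral_add hshift intervalIntegrable_const, integral_comp_add_left,
          intervalIntegral.integral_const, smul_eq_mul, add_comm, neg_add_eq_sub, neg_add_eq_sub]

theorem integral_le_mul_add_integral_posPart_sub (hmono : MonotoneOn g (Ici 0))
    (hsub : ∀ x y, 0 ≤ x → 0 ≤ y → g (x + y) ≤ g x + g y) {s t c : ℝ}
    (hs : 0 ≤ s) (hc : 0 ≤ c) (hst : s ≤ t) :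
    ∫ x in s..t, g x ≤ (t - s) * g c + ∫ x in (max (s - c) 0)..(max (t - c) 0), g x := by
  rcases le_total c s with hcs | hsc
  · rw [max_eq_left (by linarith), max_eq_left (by linarith)]
    exact integral_le_mul_add_integral_sub_of_subadditive hmono hsub hc hcs hst
  rcases le_total t c with htc | hct
  · rw [max_eq_right (by linarith), max_eq_right (by linarith), integral_same, add_zero]
    exact integral_le_mul_of_monotoneOn_Ici hmono hs hst htc
  · rw [max_eq_right (by linarith), max_eq_left (by linarith),
      ← integral_add_adjacent_intervals (b := c)
        (intervalIntegrable_of_monotoneOn_Ici hmono hs hc)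
        (intervalIntegrable_of_monotoneOn_Ici hmono hc (hc.trans hct))]
    have hleft := integral_le_mul_of_monotoneOn_Ici hmono hs hsc le_rfl
    have hright := integral_le_mul_add_integral_sub_of_subadditive hmono hsub hc le_rfl hct
    rw [sub_self] at hright
    linarith

lemma mul_le_two_mul_integral_of_subadditive (hmono : MonotoneOn g (Ici 0))
    (hsub : ∀ x y, 0 ≤ x → 0 ≤ y → g (x + y) ≤ g x + g y) {a h : ℝ} (ha : 0 ≤ a) (hh : 0 ≤ h) :
    h * g (a + h) ≤ 2 * ∫ x in (0 : ℝ)..h, g (a + x) := by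
  have hshift : IntervalIntegrable (fun x ↦ g (a + x)) volume 0 h :=
    intervalIntegrable_comp_add_of_monotoneOn_Ici hmono (by linarith) (by linarith)
  have hrefl : IntervalIntegrable (fun x ↦ g (h - x)) volume 0 h :=
    AntitoneOn.intervalIntegrable fun x hx y hy hxy ↦ by
      rw [uIcc_of_le hh] at hx hy
      exact hmono (mem_Ici.2 (by linarith [hy.2])) (mem_Ici.2 (by linarith [hx.2])) (by linarith)
  have hg : IntervalIntegrable g volume 0 h := intervalIntegrable_of_monotoneOn_Ici hmono le_rfl hh
  have hsplit : h * g (a + h) ≤ (∫ x in (0 : ℝ)..h, g (a + x)) + ∫ x in (0 : ℝ)..h, g x := by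
    calc h * g (a + h) = ∫ _ in (0 : ℝ)..h, g (a + h) := by simp
      _ ≤ ∫ x in (0 : ℝ)..h, (g (a + x) + g (h - x)) :=
          integral_mono_on hh intervalIntegrable_const (hshift.add hrefl) fun x hx ↦ by
            simpa using hsub (a + x) (h - x) (by linarith [hx.1]) (by linarith [hx.2])
      _ = (∫ x in (0 : ℝ)..h, g (a + x)) + ∫ x in (0 : ℝ)..h, g x := by
          rw [integral_add hshift hrefl, integral_comp_sub_left, sub_self, sub_zero]
  have hbase_le_shift : ∫ x in (0 : ℝ)..h, g x ≤ ∫ x in (0 : ℝ)..h, g (a + x) :=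
    integral_mono_on hh hg hshift fun x hx ↦
      hmono hx.1 (mem_Ici.2 (by linarith [hx.1])) (by linarith)
  linarith

end

theorem stmt_3_general (g : ℝ → ℝ)
    (hmono : MonotoneOn g (Set.Ici 0))
    (hsub : ∀ x y : ℝ, 0 ≤ x → 0 ≤ y → g (x + y) ≤ g x + g y)
    (w_a w_o w_j : ℝ) (hwa : 0 ≤ w_a) (hwo : 0 ≤ w_o) (hwj : 0 ≤ w_j) :
    (∫ x in w_a..(w_a + w_j), g x) -
      (∫ x in (max (w_a - w_o - w_j) 0)..(max (w_a - w_o) 0), g x) ≤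
        2 * ∫ x in (0:ℝ)..w_j, g (w_o + x) := by
  have hsplit := integral_le_mul_add_integral_posPart_sub hmono hsub (c := w_o + w_j) hwa
    (by linarith) (le_add_of_nonneg_right hwj)
  rw [show w_a - (w_o + w_j) = w_a - w_o - w_j by ring,
    show w_a + w_j - (w_o + w_j) = w_a - w_o by ring, add_sub_cancel_left] at hsplit
  linarith [mul_le_two_mul_integral_of_subadditive hmono hsub hwo hwj]

theorem stmt_3 (g : ℝ → ℝ)
    (hnonneg : ∀ x : ℝ, 0 ≤ x → 0 ≤ g x)
    (hmono : MonotoneOn g (Set.Ici 0))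
    (hsub : ∀ x y : ℝ, 0 ≤ x → 0 ≤ y → g (x + y) ≤ g x + g y)
    (h0 : 0 ≤ g 0)
    (w_a w_o w_j : ℝ) (hwa : 0 ≤ w_a) (hwo : 0 ≤ w_o) (hwj : 0 ≤ w_j) :
    (∫ x in w_a..(w_a + w_j), g x) -
      (∫ x in (max (w_a - w_o - w_j) 0)..(max (w_a - w_o) 0), g x) ≤
        2 * ∫ x in (0:ℝ)..w_j, g (w_o + x) :=
  stmt_3_general g hmono hsub w_a w_o w_j hwa hwo hwj
end

section
/- Let g : ℝ≥0 → ℝ≥0 be non-decreasing and subadditive with g(0) ≥ 0. Then for all w_o, w_j ≥ 0, ∫_0^{w_j} g(w_o + w_j) dx ≤ 2 ∫_0^{w_j} g(w_o + x) dx; equivalently, w_j · g(w_o + w_j) ≤ 2 ∫_0^{w_j} g(w_o + x) dx. -/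
theorem stmt_4 (g : ℝ → ℝ)
    (hnonneg : ∀ x : ℝ, 0 ≤ x → 0 ≤ g x)
    (hmono : MonotoneOn g (Set.Ici 0))
    (hsub : ∀ x y : ℝ, 0 ≤ x → 0 ≤ y → g (x + y) ≤ g x + g y)
    (h0 : 0 ≤ g 0)
    (w_o w_j : ℝ) (hwo : 0 ≤ w_o) (hwj : 0 ≤ w_j) :
    w_j * g (w_o + w_j) ≤ 2 * ∫ x in (0:ℝ)..w_j, g (w_o + x) := by
  have hgint : IntervalIntegrable g MeasureTheory.volume w_o (w_o + w_j) := by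
    apply MonotoneOn.intervalIntegrable
    apply hmono.mono
    rw [Set.uIcc_of_le (by linarith)]
    intro x hx
    exact le_trans hwo hx.1
  have h1 : IntervalIntegrable (fun x => g (w_o + x)) MeasureTheory.volume 0 w_j := by
    have := (hgint.comp_add_left w_o)
    simpa using this
  have h2 : IntervalIntegrable (fun x => g (w_o + w_j - x)) MeasureTheory.volume 0 w_j := by
    have := hgint.symm.comp_sub_left (w_o + w_j)
    simpa using this
  have hrefl : (∫ x in (0:ℝ)..w_j, g (w_o + w_j - x)) = ∫ x in (0:ℝ)..w_j, g (w_o + x) := by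
    rw [intervalIntegral.integral_comp_sub_left g (w_o + w_j),
        intervalIntegral.integral_comp_add_left g w_o]
    norm_num
  have hconst : w_j * g (w_o + w_j) = ∫ _x in (0:ℝ)..w_j, g (w_o + w_j) := by
    rw [intervalIntegral.integral_const]; simp [smul_eq_mul, mul_comm]
  have hmain : (∫ _x in (0:ℝ)..w_j, g (w_o + w_j))
      ≤ ∫ x in (0:ℝ)..w_j, (g (w_o + x) + g (w_o + w_j - x)) := by
    apply intervalIntegral.integral_mono_on hwj intervalIntegrable_const (h1.add h2)
    intro x hx
    obtain ⟨hx0, hxj⟩ := hx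
    have step1 : g (w_o + w_j) ≤ g (w_o + x) + g (w_j - x) := by
      have := hsub (w_o + x) (w_j - x) (by linarith) (by linarith)
      simpa [show w_o + x + (w_j - x) = w_o + w_j by ring] using this
    have step2 : g (w_j - x) ≤ g (w_o + w_j - x) :=
      hmono (by simp; linarith) (by simp; linarith) (by linarith)
    linarith
  rw [intervalIntegral.integral_add h1 h2, hrefl] at hmain
  linarith [hconst, hmain]
end

section
/- Let g : ℝ≥0 → ℝ≥0 be non-decreasing and subadditive with g(0) ≥ 0, and let w_a, w_o, w_j ≥ 0 with w_a ≥ w_o + w_j. Then ∫_{w_a}^{w_a+w_j} g(x) dx − ∫_{w_a−w_o−w_j}^{w_a−w_o} g(x) dx ≤ w_j · g(w_o + w_j). -/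
theorem stmt_5 (g : ℝ → ℝ)
    (hnonneg : ∀ x : ℝ, 0 ≤ x → 0 ≤ g x)
    (hmono : MonotoneOn g (Set.Ici 0))
    (hsub : ∀ x y : ℝ, 0 ≤ x → 0 ≤ y → g (x + y) ≤ g x + g y)
    (h0 : 0 ≤ g 0)
    (w_a w_o w_j : ℝ) (hwo : 0 ≤ w_o) (hwj : 0 ≤ w_j)
    (hge : w_o + w_j ≤ w_a) :
    (∫ x in w_a..(w_a + w_j), g x) -
      (∫ x in (w_a - w_o - w_j)..(w_a - w_o), g x) ≤ w_j * g (w_o + w_j) := by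
  set c := w_o + w_j with hc
  have hA : (0:ℝ) ≤ w_a - w_o - w_j := by linarith
  have hc0 : 0 ≤ c := by positivity
  have hint : ∀ a b : ℝ, 0 ≤ a → a ≤ b →
      IntervalIntegrable g MeasureTheory.volume a b := by
    intro a b ha hab
    apply MonotoneOn.intervalIntegrable
    apply hmono.mono
    intro x hx
    have := Set.uIcc_of_le hab ▸ hx
    exact le_trans ha (Set.mem_Icc.mp this).1
  have h1 : IntervalIntegrable g MeasureTheory.volume (w_a - w_o - w_j) (w_a - w_o) :=
    hint _ _ hA (by linarith)
  have h2 : IntervalIntegrable (fun x => g (x + c)) MeasureTheory.volume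
      (w_a - w_o - w_j) (w_a - w_o) := by
    have h := (hint w_a (w_a + w_j) (by linarith) (by linarith)).comp_add_right c
    have e1 : w_a - c = w_a - w_o - w_j := by rw [hc]; ring
    have e2 : w_a + w_j - c = w_a - w_o := by rw [hc]; ring
    rwa [e1, e2] at h
  have hshift : (∫ x in w_a..(w_a + w_j), g x)
      = ∫ x in (w_a - w_o - w_j)..(w_a - w_o), g (x + c) := by
    rw [intervalIntegral.integral_comp_add_right]
    congr 1 <;> (rw [hc]; ring)
  rw [hshift, ← intervalIntegral.integral_sub h2 h1]
  have hbound : (∫ x in (w_a - w_o - w_j)..(w_a - w_o), g (x + c) - g x)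
      ≤ ∫ x in (w_a - w_o - w_j)..(w_a - w_o), g c := by
    apply intervalIntegral.integral_mono_on (by linarith) (h2.sub h1)
      intervalIntegrable_const
    intro x hx
    have hx0 : 0 ≤ x := le_trans hA hx.1
    have := hsub x c hx0 hc0
    linarith
  calc (∫ x in (w_a - w_o - w_j)..(w_a - w_o), g (x + c) - g x)
      ≤ ∫ x in (w_a - w_o - w_j)..(w_a - w_o), g c := hbound
    _ = w_j * g c := by
        rw [intervalIntegral.integral_const, smul_eq_mul, hc]
        ring
end

section
/- Let g : ℝ≥0 → ℝ≥0 be non-decreasing and subadditive, w_o, w_j ≥ 0, and w_a = w_o + δ for some δ ∈ (0, w_j). Then ∫_{w_a}^{w_a+w_j} g(x) dx − ∫_0^{δ} g(x) dx ≤ w_j · g(w_o + w_j). -/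
theorem stmt_7 (g : ℝ → ℝ)
    (hnonneg : ∀ x : ℝ, 0 ≤ x → 0 ≤ g x)
    (hmono : MonotoneOn g (Set.Ici 0))
    (hsub : ∀ x y : ℝ, 0 ≤ x → 0 ≤ y → g (x + y) ≤ g x + g y)
    (w_o w_j δ : ℝ) (hwo : 0 ≤ w_o) (hwj : 0 ≤ w_j)
    (hδ : δ ∈ Set.Ioo 0 w_j) (w_a : ℝ) (hwa : w_a = w_o + δ) :
    (∫ x in w_a..(w_a + w_j), g x) - (∫ x in (0:ℝ)..δ, g x) ≤
      w_j * g (w_o + w_j) := by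
  obtain ⟨hδ0, hδw⟩ := hδ
  set c := w_o + w_j with hc
  have hwac : w_a ≤ c := by rw [hwa, hc]; linarith
  have hwa0 : 0 ≤ w_a := by rw [hwa]; linarith
  have hint : ∀ a b : ℝ, 0 ≤ a → a ≤ b →
      IntervalIntegrable g MeasureTheory.volume a b := by
    intro a b ha hab
    apply MonotoneOn.intervalIntegrable
    apply hmono.mono
    rw [Set.uIcc_of_le hab]
    exact fun x hx => le_trans ha hx.1
  have hc0 : 0 ≤ c := by positivity
  have hsplit := intervalIntegral.integral_add_adjacent_intervals
    (hint w_a c hwa0 hwac) (hint c (c + δ) hc0 (by linarith))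
  have hwaj : w_a + w_j = c + δ := by rw [hwa, hc]; ring
  -- bound first piece
  have h1 : (∫ x in w_a..c, g x) ≤ (c - w_a) * g c := by
    have := intervalIntegral.integral_mono_on hwac (hint w_a c hwa0 hwac)
      (intervalIntegrable_const (c := g c))
      (fun x hx => hmono (le_trans hwa0 hx.1) hc0 hx.2)
    simpa using this
  -- second piece: shift
  have hshift : (∫ x in c..(c + δ), g x) = ∫ x in (0:ℝ)..δ, g (x + c) := by
    rw [intervalIntegral.integral_comp_add_right (a := 0) (b := δ) (d := c) g]
    simp [add_comm]
  have hintshift : IntervalIntegrable (fun x => g (x + c)) MeasureTheory.volume 0 δ := by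
    apply MonotoneOn.intervalIntegrable
    intro x hx y hy hxy
    rw [Set.uIcc_of_le hδ0.le] at hx hy
    exact hmono (by simp [Set.mem_Ici]; linarith [hx.1]) (by simp [Set.mem_Ici]; linarith [hy.1])
      (by linarith)
  have hintδ : IntervalIntegrable g MeasureTheory.volume 0 δ := hint 0 δ le_rfl hδ0.le
  have h2 : (∫ x in c..(c + δ), g x) ≤ δ * g c + ∫ x in (0:ℝ)..δ, g x := by
    rw [hshift]
    have hle : (∫ x in (0:ℝ)..δ, g (x + c)) ≤ ∫ x in (0:ℝ)..δ, (g x + g c) := by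
      apply intervalIntegral.integral_mono_on hδ0.le hintshift
        (hintδ.add (intervalIntegrable_const (c := g c)))
      intro x hx
      exact hsub x c hx.1 hc0
    have heq : (∫ x in (0:ℝ)..δ, (g x + g c)) = (∫ x in (0:ℝ)..δ, g x) + δ * g c := by
      rw [intervalIntegral.integral_add hintδ (intervalIntegrable_const (c := g c))]
      simp [smul_eq_mul]
    linarith
  have key : (∫ x in w_a..(w_a + w_j), g x) ≤
      (c - w_a) * g c + (δ * g c + ∫ x in (0:ℝ)..δ, g x) := by
    rw [hwaj, ← hsplit]
    exact add_le_add h1 h2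
  have h3 : (c - w_a) * g c + δ * g c = w_j * g c := by
    have : c - w_a + δ = w_j := by rw [hwa, hc]; ring
    rw [← this]; ring
  linarith
end
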